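/- Every suffix of a minimum augmentation sequence is itself a minimum augmentation sequence. That is, if S = s_1⋯s_k satisfies S = MCRS(^S I), then for each t ∈ [k], the suffix S_t = s_t⋯s_k satisfies S_t = MCRS(^{S_t} I). -/
import Mathlib


/-- A directed graph with node set `V ⊆ ℕ` and arc set `A`.  Leaves are
identified with their taxon labels (natural numbers). -/
structure Net where
  V : Finset ℕ
  A : Finset (ℕ × ℕ)

namespace Net

def indeg (N : Net) (v : ℕ) : ℕ := (N.A.filter (fun a => a.2 = v)).card
def outdeg (N : Net) (v : ℕ) : ℕ := (N.A.filter (fun a => a.1 = v)).card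

def isLeaf (N : Net) (v : ℕ) : Prop := v ∈ N.V ∧ N.indeg v = 1 ∧ N.outdeg v = 0
def isRoot (N : Net) (v : ℕ) : Prop := v ∈ N.V ∧ N.indeg v = 0 ∧ N.outdeg v = 1
def isTreeNode (N : Net) (v : ℕ) : Prop := v ∈ N.V ∧ N.indeg v = 1 ∧ N.outdeg v = 2
def isRetic (N : Net) (v : ℕ) : Prop := v ∈ N.V ∧ N.indeg v = 2 ∧ N.outdeg v = 1

/-- The set of leaves (= taxa) of a network. -/
def leaves (N : Net) : Finset ℕ := N.V.filter (fun v => N.indeg v = 1 ∧ N.outdeg v = 0)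

/-- Number of reticulation nodes. -/
def numRetic (N : Net) : ℕ := (N.V.filter (fun v => N.indeg v = 2 ∧ N.outdeg v = 1)).card

/-- `N` is a rooted binary phylogenetic network: arcs join nodes, it is acyclic,
has a unique root, and every node is a root, leaf, tree node or reticulation. -/
def isPhylo (N : Net) : Prop :=
  (∀ a ∈ N.A, a.1 ∈ N.V ∧ a.2 ∈ N.V) ∧
  (∀ v, ¬ Relation.TransGen (fun u w => (u, w) ∈ N.A) v v) ∧
  (∃! r, N.isRoot r) ∧
  (∀ v ∈ N.V, N.isRoot v ∨ N.isLeaf v ∨ N.isTreeNode v ∨ N.isRetic v)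

/-- `(i,j)` is a cherry: `i ≠ j` are leaves with a common parent. -/
def isCherry (N : Net) (i j : ℕ) : Prop :=
  i ≠ j ∧ N.isLeaf i ∧ N.isLeaf j ∧ ∃ p, (p, i) ∈ N.A ∧ (p, j) ∈ N.A

/-- `(i,j)` is a reticulated cherry: the parent of `i` is a reticulation,
the parent of `j` is a tree node and a parent of the parent of `i`. -/
def isRetCherry (N : Net) (i j : ℕ) : Prop :=
  i ≠ j ∧ N.isLeaf i ∧ N.isLeaf j ∧
    ∃ pi pj, (pi, i) ∈ N.A ∧ (pj, j) ∈ N.A ∧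
      N.isRetic pi ∧ N.isTreeNode pj ∧ (pj, pi) ∈ N.A

/-- `(i,j)` is a reducible pair. -/
def Reducible (N : Net) (s : ℕ × ℕ) : Prop := N.isCherry s.1 s.2 ∨ N.isRetCherry s.1 s.2

end Net

/-- The reduction of a cherry `(i,j)`: delete leaf `i` and simplify the
(now elementary) common parent `p`, whose parent is `g`. -/
def CherryReduce (N : Net) (i j : ℕ) (N' : Net) : Prop :=
  ∃ p g, (p, i) ∈ N.A ∧ (p, j) ∈ N.A ∧ (g, p) ∈ N.A ∧
    N'.V = (N.V.erase i).erase p ∧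
    N'.A = (N.A \ {(p, i), (p, j), (g, p)}) ∪ {(g, j)}

/-- The reduction of a reticulated cherry `(i,j)`: delete the arc from the parent
`pj` of `j` to the parent `pi` of `i`, and simplify the two elementary nodes. -/
def RetCherryReduce (N : Net) (i j : ℕ) (N' : Net) : Prop :=
  ∃ pi pj q g, (pi, i) ∈ N.A ∧ (pj, j) ∈ N.A ∧ (pj, pi) ∈ N.A ∧
    (q, pi) ∈ N.A ∧ q ≠ pj ∧ (g, pj) ∈ N.A ∧
    N'.V = (N.V.erase pi).erase pj ∧
    N'.A = (N.A \ {(pj, pi), (q, pi), (pi, i), (g, pj), (pj, j)}) ∪ {(q, i), (g, j)}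

/-- `N'` is the reduction `N^{(i,j)}` of the reducible pair `s = (i,j)` in `N`. -/
def Reduces (N : Net) (s : ℕ × ℕ) (N' : Net) : Prop :=
  (N.isCherry s.1 s.2 ∧ CherryReduce N s.1 s.2 N') ∨
  (N.isRetCherry s.1 s.2 ∧ RetCherryReduce N s.1 s.2 N')

/-- `N'` is the result of reducing in `N` the pairs of the sequence `S`, from left to right. -/
inductive ReducesSeq : Net → List (ℕ × ℕ) → Net → Prop
  | nil (N : Net) : ReducesSeq N [] N
  | cons {N M N' : Net} {s : ℕ × ℕ} {S : List (ℕ × ℕ)} :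
      Reduces N s M → ReducesSeq M S N' → ReducesSeq N (s :: S) N'

/-- `N` is the trivial network `I l` (a root and the leaf `l`). -/
def isTrivial (N : Net) (l : ℕ) : Prop :=
  ∃ r, r ≠ l ∧ N.V = {r, l} ∧ N.A = {(r, l)}

/-- `S` is a complete reducible sequence for `N`. -/
def CompleteRS (N : Net) (S : List (ℕ × ℕ)) : Prop :=
  ∃ N' l, ReducesSeq N S N' ∧ isTrivial N' l

/-- `N` is an orchard network. -/
def Net.isOrchard (N : Net) : Prop := N.isPhylo ∧ ∃ S, CompleteRS N S

/-- Isomorphism of networks: an arc-preserving and arc-reflecting bijection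
of the nodes which is the identity on the leaves. -/
def NetIso (N N' : Net) : Prop :=
  ∃ φ : ℕ → ℕ, Set.BijOn φ ↑N.V ↑N'.V ∧
    (∀ u ∈ N.V, ∀ v ∈ N.V, ((u, v) ∈ N.A ↔ (φ u, φ v) ∈ N'.A)) ∧
    ∀ l ∈ N.leaves, φ l = l

/-- Augmentation of `(i,j)` when `i` is a new taxon: create a new leaf `i`,
subdivide the arc `(q,j)` into `j` with a new node `p`, and add the arc `(p,i)`. -/
def CherryAug (N : Net) (i j : ℕ) (N' : Net) : Prop :=
  ∃ q p, (q, j) ∈ N.A ∧ i ∉ N.V ∧ p ∉ N.V ∧ p ≠ i ∧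
    N'.V = insert i (insert p N.V) ∧
    N'.A = (N.A.erase (q, j)) ∪ {(q, p), (p, j), (p, i)}

/-- Augmentation of `(i,j)` when `i` is already a leaf: subdivide the arcs into
`i` and `j` with new nodes `pi`, `pj` and add the arc `(pj, pi)`. -/
def RetAug (N : Net) (i j : ℕ) (N' : Net) : Prop :=
  ∃ qi qj pi pj, (qi, i) ∈ N.A ∧ (qj, j) ∈ N.A ∧
    pi ∉ N.V ∧ pj ∉ N.V ∧ pi ≠ pj ∧
    N'.V = insert pi (insert pj N.V) ∧
    N'.A = ((N.A.erase (qi, i)).erase (qj, j)) ∪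
      {(qi, pi), (pi, i), (qj, pj), (pj, j), (pj, pi)}

/-- `N'` is the augmentation `^{(i,j)}N` of the pair `s = (i,j)` in `N`. -/
def Augments (N : Net) (s : ℕ × ℕ) (N' : Net) : Prop :=
  s.1 ≠ s.2 ∧ N.isLeaf s.2 ∧
    ((s.1 ∉ N.leaves ∧ CherryAug N s.1 s.2 N') ∨
     (s.1 ∈ N.leaves ∧ RetAug N s.1 s.2 N'))

/-- The total order on pairs: `(i,j) ≤ (i',j')` iff `i < i'` or (`i = i'` and `j ≤ j'`). -/
def pairLE (p q : ℕ × ℕ) : Prop := p.1 < q.1 ∨ (p.1 = q.1 ∧ p.2 ≤ q.2)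

/-- Strict version of `pairLE`. -/
def pairLT (p q : ℕ × ℕ) : Prop := p.1 < q.1 ∨ (p.1 = q.1 ∧ p.2 < q.2)

/-- Lexicographic order on sequences of pairs (of the same length). -/
def seqLE : List (ℕ × ℕ) → List (ℕ × ℕ) → Prop
  | [], [] => True
  | p :: S, q :: S' => pairLT p q ∨ (p = q ∧ seqLE S S')
  | _, _ => False

/-- `s` is the minimum reducible pair of `N`. -/
def isMRP (N : Net) (s : ℕ × ℕ) : Prop :=
  N.Reducible s ∧ ∀ t, N.Reducible t → pairLE s t

/-- `S` is the minimum complete reducible sequence of `N`. -/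
def isMCRS (N : Net) (S : List (ℕ × ℕ)) : Prop :=
  CompleteRS N S ∧ ∀ S', CompleteRS N S' → seqLE S S'

/-- `N` is (isomorphic to) the network `^S I` generated by applying the
augmentations of `S`, from right to left, to a trivial network. -/
inductive Generates : List (ℕ × ℕ) → Net → Prop
  | triv {N : Net} {l : ℕ} : isTrivial N l → Generates [] N
  | cons {s : ℕ × ℕ} {S : List (ℕ × ℕ)} {N N' : Net} :
      Generates S N → Augments N s N' → Generates (s :: S) N'

/-- `S` is a minimum augmentation sequence: `S = MCRS(^S I)`. -/
def isMinAugSeq (S : List (ℕ × ℕ)) : Prop :=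
  ∃ N, Generates S N ∧ isMCRS N S

/-- `N` is tree-child: every internal node has a child that is not a reticulation. -/
def Net.isTreeChild (N : Net) : Prop :=
  ∀ v ∈ N.V, ¬ N.isLeaf v → ∃ c, (v, c) ∈ N.A ∧ ¬ N.isRetic c

/-- The possible states of a taxon in a network. -/
inductive LState | sN | sP | sS | sT
deriving DecidableEq

open Classical in
/-- The state `σ_N(i)` of a taxon `i`: `sN` if `i` is not a leaf of `N`; otherwise
`sP` if its parent is a reticulation; otherwise `sS` if its sibling is a
reticulation; otherwise `sT`. -/
noncomputable def state (N : Net) (i : ℕ) : LState :=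
  if ¬ N.isLeaf i then .sN
  else if ∃ p, (p, i) ∈ N.A ∧ N.isRetic p then .sP
  else if ∃ p s, (p, i) ∈ N.A ∧ (p, s) ∈ N.A ∧ s ≠ i ∧ N.isRetic s then .sS
  else .sT

section MinAugAux

/-- All arcs join nodes of the network. -/
def ArcsOK (N : Net) : Prop := ∀ a ∈ N.A, a.1 ∈ N.V ∧ a.2 ∈ N.V

lemma Net.ext' {N N' : Net} (h1 : N.V = N'.V) (h2 : N.A = N'.A) : N = N' := by
  cases N; cases N'; simp_all

lemma mem_leaves_iff {M : Net} {i : ℕ} : i ∈ M.leaves ↔ M.isLeaf i := by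
  simp [Net.leaves, Net.isLeaf, Finset.mem_filter, and_assoc]

lemma no_out {M : Net} {j : ℕ} (h : M.outdeg j = 0) : ∀ a ∈ M.A, a.1 ≠ j := by
  intro a ha hj
  have : a ∈ M.A.filter (fun a => a.1 = j) := Finset.mem_filter.mpr ⟨ha, hj⟩
  rw [Finset.card_eq_zero.mp h] at this
  exact absurd this (Finset.notMem_empty a)

lemma parent_unique {M : Net} {j q : ℕ} (h1 : M.indeg j = 1) (h2 : (q, j) ∈ M.A) :
    ∀ a ∈ M.A, a.2 = j → a = (q, j) := by
  intro a ha haj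
  obtain ⟨b, hb⟩ := Finset.card_eq_one.mp h1
  have ha' : a ∈ M.A.filter (fun a => a.2 = j) := Finset.mem_filter.mpr ⟨ha, haj⟩
  have hq' : (q, j) ∈ M.A.filter (fun a => a.2 = j) := Finset.mem_filter.mpr ⟨h2, rfl⟩
  rw [hb, Finset.mem_singleton] at ha' hq'
  rw [ha', hq']

lemma arcsOK_of_trivial {N : Net} {l : ℕ} (h : isTrivial N l) : ArcsOK N := by
  obtain ⟨r, _, hV, hA⟩ := h
  intro a ha
  rw [hA, Finset.mem_singleton] at ha
  subst ha
  simp [hV]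

lemma arcsOK_aug {M N : Net} {s : ℕ × ℕ} (hM : ArcsOK M) (h : Augments M s N) : ArcsOK N := by
  obtain ⟨i, j⟩ := s
  obtain ⟨hne, hleaf, h⟩ := h
  rcases h with ⟨-, q, p, hqj, hiV, hpV, hpi, hV, hA⟩ |
    ⟨-, qi, qj, pi, pj, hqiA, hqjA, hpiV, hpjV, hpipj, hV, hA⟩
  · intro a ha
    rw [hA] at ha
    simp only [Finset.mem_union, Finset.mem_erase, Finset.mem_insert,
      Finset.mem_singleton] at ha
    rcases ha with ⟨-, ha⟩ | rfl | rfl | rfl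
    · have := hM _ ha; simp [hV, this.1, this.2]
    · simp [hV, (hM _ hqj).1]
    · simp [hV, (hM _ hqj).2]
    · simp [hV]
  · intro a ha
    rw [hA] at ha
    simp only [Finset.mem_union, Finset.mem_erase, Finset.mem_insert,
      Finset.mem_singleton] at ha
    rcases ha with ⟨-, -, ha⟩ | rfl | rfl | rfl | rfl | rfl
    · have := hM _ ha; simp [hV, this.1, this.2]
    · simp [hV, (hM _ hqiA).1]
    · simp [hV, (hM _ hqiA).2]
    · simp [hV, (hM _ hqjA).1]
    · simp [hV, (hM _ hqjA).2]
    · simp [hV]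

lemma generates_arcsOK {S : List (ℕ × ℕ)} {N : Net} (h : Generates S N) : ArcsOK N := by
  induction h with
  | triv h => exact arcsOK_of_trivial h
  | cons hg ha ih => exact arcsOK_aug ih ha

lemma aug_key {M N : Net} {s : ℕ × ℕ} (hM : ArcsOK M) (h : Augments M s N) :
    Reduces N s M ∧ ∀ M₀, Reduces N s M₀ → M₀ = M := by
  obtain ⟨i, j⟩ := s
  obtain ⟨hij, hleafj, h⟩ := h
  simp only at hij hleafj
  rcases h with ⟨hnl, q, p, hqj, hiV, hpV, hpi, hV, hA⟩ |
    ⟨hil, qi, qj, pi, pj, hqiA, hqjA, hpiV, hpjV, hpipj, hV, hA⟩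
  · -- CherryAug case
    have hqV : q ∈ M.V := (hM _ hqj).1
    have hjV : j ∈ M.V := (hM _ hqj).2
    have hji : j ≠ i := fun h => hiV (h ▸ hjV)
    have hqi : q ≠ i := fun h => hiV (h ▸ hqV)
    have hjp : j ≠ p := fun h => hpV (h ▸ hjV)
    have hqp : q ≠ p := fun h => hpV (h ▸ hqV)
    have hjout : ∀ a ∈ M.A, a.1 ≠ j := no_out hleafj.2.2
    have hqj' : q ≠ j := hjout _ hqj
    have hparj : ∀ a ∈ M.A, a.2 = j → a = (q, j) := parent_unique hleafj.2.1 hqj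
    have hMi : ∀ a ∈ M.A, a.1 ≠ i ∧ a.2 ≠ i := fun a ha =>
      ⟨fun h => hiV (h ▸ (hM a ha).1), fun h => hiV (h ▸ (hM a ha).2)⟩
    have hMp : ∀ a ∈ M.A, a.1 ≠ p ∧ a.2 ≠ p := fun a ha =>
      ⟨fun h => hpV (h ▸ (hM a ha).1), fun h => hpV (h ▸ (hM a ha).2)⟩
    have hmemA : ∀ a : ℕ × ℕ, a ∈ N.A ↔
        (a ≠ (q, j) ∧ a ∈ M.A) ∨ a = (q, p) ∨ a = (p, j) ∨ a = (p, i) := by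
      intro a
      rw [hA]
      simp only [Finset.mem_union, Finset.mem_erase, Finset.mem_insert, Finset.mem_singleton]
    have hFini : N.A.filter (fun a => a.2 = i) = {(p, i)} := by
      ext a
      simp only [Finset.mem_filter, hmemA, Finset.mem_singleton]
      constructor
      · rintro ⟨⟨-, haM⟩ | rfl | rfl | rfl, h2⟩
        · exact absurd h2 (hMi a haM).2
        · exact absurd h2 hpi
        · exact absurd h2 hji
        · rfl
      · rintro rfl
        exact ⟨Or.inr (Or.inr (Or.inr rfl)), rfl⟩
    have hFouti : N.A.filter (fun a => a.1 = i) = ∅ := by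
      rw [Finset.filter_eq_empty_iff]
      intro a ha
      rcases (hmemA a).mp ha with ⟨-, haM⟩ | rfl | rfl | rfl
      · exact (hMi a haM).1
      · exact hqi
      · exact hpi
      · exact hpi
    have hFinj : N.A.filter (fun a => a.2 = j) = {(p, j)} := by
      ext a
      simp only [Finset.mem_filter, hmemA, Finset.mem_singleton]
      constructor
      · rintro ⟨⟨hne, haM⟩ | rfl | rfl | rfl, h2⟩
        · exact absurd (hparj a haM h2) hne
        · exact absurd h2 (Ne.symm hjp)
        · rfl
        · exact absurd h2 hij
      · rintro rfl
        exact ⟨Or.inr (Or.inr (Or.inl rfl)), rfl⟩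
    have hFoutj : N.A.filter (fun a => a.1 = j) = ∅ := by
      rw [Finset.filter_eq_empty_iff]
      intro a ha
      rcases (hmemA a).mp ha with ⟨-, haM⟩ | rfl | rfl | rfl
      · exact hjout a haM
      · exact hqj'
      · exact Ne.symm hjp
      · exact Ne.symm hjp
    have hFinp : N.A.filter (fun a => a.2 = p) = {(q, p)} := by
      ext a
      simp only [Finset.mem_filter, hmemA, Finset.mem_singleton]
      constructor
      · rintro ⟨⟨-, haM⟩ | rfl | rfl | rfl, h2⟩
        · exact absurd h2 (hMp a haM).2
        · rfl
        · exact absurd h2 hjp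
        · exact absurd h2 (Ne.symm hpi)
      · rintro rfl
        exact ⟨Or.inr (Or.inl rfl), rfl⟩
    have hpin : ∀ p', (p', i) ∈ N.A → p' = p := by
      intro p' hmem
      have : ((p', i) : ℕ × ℕ) ∈ N.A.filter (fun a => a.2 = i) :=
        Finset.mem_filter.mpr ⟨hmem, rfl⟩
      rw [hFini, Finset.mem_singleton] at this
      exact congrArg Prod.fst this
    have hgin : ∀ g', (g', p) ∈ N.A → g' = q := by
      intro g' hmem
      have : ((g', p) : ℕ × ℕ) ∈ N.A.filter (fun a => a.2 = p) :=
        Finset.mem_filter.mpr ⟨hmem, rfl⟩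
      rw [hFinp, Finset.mem_singleton] at this
      exact congrArg Prod.fst this
    have hpiA : ((p, i) : ℕ × ℕ) ∈ N.A := (hmemA _).mpr (Or.inr (Or.inr (Or.inr rfl)))
    have hpjA : ((p, j) : ℕ × ℕ) ∈ N.A := (hmemA _).mpr (Or.inr (Or.inr (Or.inl rfl)))
    have hqpA : ((q, p) : ℕ × ℕ) ∈ N.A := (hmemA _).mpr (Or.inr (Or.inl rfl))
    have hleafNi : N.isLeaf i :=
      ⟨by simp [hV], by simp [Net.indeg, hFini], by simp [Net.outdeg, hFouti]⟩
    have hleafNj : N.isLeaf j :=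
      ⟨by simp [hV, hjV], by simp [Net.indeg, hFinj], by simp [Net.outdeg, hFoutj]⟩
    have hcherry : N.isCherry i j := ⟨hij, hleafNi, hleafNj, p, hpiA, hpjA⟩
    have hVeq : (N.V.erase i).erase p = M.V := by
      have h1 : i ∉ insert p M.V := by simp [hiV, Ne.symm hpi]
      rw [hV, Finset.erase_insert h1, Finset.erase_insert hpV]
    have hAeq : (N.A \ {(p, i), (p, j), (q, p)}) ∪ {(q, j)} = M.A := by
      ext a
      simp only [Finset.mem_union, Finset.mem_sdiff, hmemA, Finset.mem_insert,
        Finset.mem_singleton]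
      constructor
      · rintro (⟨h1, h2⟩ | rfl)
        · push_neg at h2
          rcases h1 with ⟨-, haM⟩ | rfl | rfl | rfl
          · exact haM
          · exact absurd rfl h2.2.2
          · exact absurd rfl h2.2.1
          · exact absurd rfl h2.1
        · exact hqj
      · intro haM
        by_cases hq : a = (q, j)
        · exact Or.inr hq
        · left
          refine ⟨Or.inl ⟨hq, haM⟩, ?_⟩
          push_neg
          refine ⟨?_, ?_, ?_⟩ <;> rintro rfl
          · exact hpV (hM _ haM).1
          · exact hpV (hM _ haM).1
          · exact hpV (hM _ haM).2
    have hred : Reduces N (i, j) M :=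
      Or.inl ⟨hcherry, p, q, hpiA, hpjA, hqpA, hVeq.symm, hAeq.symm⟩
    refine ⟨hred, ?_⟩
    intro M₀ hR
    rcases hR with ⟨-, p', g', h1, h2, h3, hV₀, hA₀⟩ | ⟨hrc, -⟩
    · obtain rfl := hpin p' h1
      obtain rfl := hgin g' h3
      exact Net.ext' (hV₀.trans hVeq) (hA₀.trans hAeq)
    · obtain ⟨-, -, -, pi, pj, hpii, -, hretic, -, -⟩ := hrc
      obtain rfl := hpin pi hpii
      have h2 := hretic.2.1
      rw [Net.indeg, hFinp] at h2
      simp at h2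
  · -- RetAug case
    have hleafi : M.isLeaf i := mem_leaves_iff.mp hil
    have hiV' : i ∈ M.V := hleafi.1
    have hjV : j ∈ M.V := hleafj.1
    have hqiV : qi ∈ M.V := (hM _ hqiA).1
    have hqjV : qj ∈ M.V := (hM _ hqjA).1
    have hiout : ∀ a ∈ M.A, a.1 ≠ i := no_out hleafi.2.2
    have hjout : ∀ a ∈ M.A, a.1 ≠ j := no_out hleafj.2.2
    have hpari : ∀ a ∈ M.A, a.2 = i → a = (qi, i) := parent_unique hleafi.2.1 hqiA
    have hparj : ∀ a ∈ M.A, a.2 = j → a = (qj, j) := parent_unique hleafj.2.1 hqjA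
    have hMpi : ∀ a ∈ M.A, a.1 ≠ pi ∧ a.2 ≠ pi := fun a ha =>
      ⟨fun h => hpiV (h ▸ (hM a ha).1), fun h => hpiV (h ▸ (hM a ha).2)⟩
    have hMpj : ∀ a ∈ M.A, a.1 ≠ pj ∧ a.2 ≠ pj := fun a ha =>
      ⟨fun h => hpjV (h ▸ (hM a ha).1), fun h => hpjV (h ▸ (hM a ha).2)⟩
    have hpii : pi ≠ i := fun h => hpiV (h ▸ hiV')
    have hpij : pi ≠ j := fun h => hpiV (h ▸ hjV)
    have hpiqi : pi ≠ qi := fun h => hpiV (h ▸ hqiV)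
    have hpiqj : pi ≠ qj := fun h => hpiV (h ▸ hqjV)
    have hpji : pj ≠ i := fun h => hpjV (h ▸ hiV')
    have hpjj : pj ≠ j := fun h => hpjV (h ▸ hjV)
    have hpjqi : pj ≠ qi := fun h => hpjV (h ▸ hqiV)
    have hpjqj : pj ≠ qj := fun h => hpjV (h ▸ hqjV)
    have hqii : qi ≠ i := hiout _ hqiA
    have hqij : qi ≠ j := hjout _ hqiA
    have hqji : qj ≠ i := hiout _ hqjA
    have hqjj : qj ≠ j := hjout _ hqjA
    have hmemA : ∀ a : ℕ × ℕ, a ∈ N.A ↔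
        (a ≠ (qj, j) ∧ a ≠ (qi, i) ∧ a ∈ M.A) ∨
          a = (qi, pi) ∨ a = (pi, i) ∨ a = (qj, pj) ∨ a = (pj, j) ∨ a = (pj, pi) := by
      intro a
      rw [hA]
      simp only [Finset.mem_union, Finset.mem_erase, Finset.mem_insert, Finset.mem_singleton]
    have hFini : N.A.filter (fun a => a.2 = i) = {(pi, i)} := by
      ext a
      simp only [Finset.mem_filter, hmemA, Finset.mem_singleton]
      constructor
      · rintro ⟨⟨-, hne, haM⟩ | rfl | rfl | rfl | rfl | rfl, h2⟩
        · exact absurd (hpari a haM h2) hne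
        · exact absurd h2 hpii
        · rfl
        · exact absurd h2 hpji
        · exact absurd h2 (Ne.symm hij)
        · exact absurd h2 hpii
      · rintro rfl
        exact ⟨Or.inr (Or.inr (Or.inl rfl)), rfl⟩
    have hFouti : N.A.filter (fun a => a.1 = i) = ∅ := by
      rw [Finset.filter_eq_empty_iff]
      intro a ha
      rcases (hmemA a).mp ha with ⟨-, -, haM⟩ | rfl | rfl | rfl | rfl | rfl
      · exact hiout a haM
      · exact hqii
      · exact hpii
      · exact hqji
      · exact hpji
      · exact hpji
    have hFinj : N.A.filter (fun a => a.2 = j) = {(pj, j)} := by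
      ext a
      simp only [Finset.mem_filter, hmemA, Finset.mem_singleton]
      constructor
      · rintro ⟨⟨hne, -, haM⟩ | rfl | rfl | rfl | rfl | rfl, h2⟩
        · exact absurd (hparj a haM h2) hne
        · exact absurd h2 hpij
        · exact absurd h2 hij
        · exact absurd h2 hpjj
        · rfl
        · exact absurd h2 hpij
      · rintro rfl
        exact ⟨Or.inr (Or.inr (Or.inr (Or.inr (Or.inl rfl)))), rfl⟩
    have hFoutj : N.A.filter (fun a => a.1 = j) = ∅ := by
      rw [Finset.filter_eq_empty_iff]
      intro a ha
      rcases (hmemA a).mp ha with ⟨-, -, haM⟩ | rfl | rfl | rfl | rfl | rfl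
      · exact hjout a haM
      · exact hqij
      · exact hpij
      · exact hqjj
      · exact hpjj
      · exact hpjj
    have hFinpi : N.A.filter (fun a => a.2 = pi) = {(qi, pi), (pj, pi)} := by
      ext a
      simp only [Finset.mem_filter, hmemA, Finset.mem_insert, Finset.mem_singleton]
      constructor
      · rintro ⟨⟨-, -, haM⟩ | rfl | rfl | rfl | rfl | rfl, h2⟩
        · exact absurd h2 (hMpi a haM).2
        · exact Or.inl rfl
        · exact absurd h2 (Ne.symm hpii)
        · exact absurd h2 (Ne.symm hpipj)
        · exact absurd h2 (Ne.symm hpij)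
        · exact Or.inr rfl
      · rintro (rfl | rfl)
        · exact ⟨Or.inr (Or.inl rfl), rfl⟩
        · exact ⟨Or.inr (Or.inr (Or.inr (Or.inr (Or.inr rfl)))), rfl⟩
    have hFoutpi : N.A.filter (fun a => a.1 = pi) = {(pi, i)} := by
      ext a
      simp only [Finset.mem_filter, hmemA, Finset.mem_singleton]
      constructor
      · rintro ⟨⟨-, -, haM⟩ | rfl | rfl | rfl | rfl | rfl, h2⟩
        · exact absurd h2 (hMpi a haM).1
        · exact absurd h2 (Ne.symm hpiqi)
        · rfl
        · exact absurd h2 (Ne.symm hpiqj)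
        · exact absurd h2 hpipj.symm
        · exact absurd h2 hpipj.symm
      · rintro rfl
        exact ⟨Or.inr (Or.inr (Or.inl rfl)), rfl⟩
    have hFinpj : N.A.filter (fun a => a.2 = pj) = {(qj, pj)} := by
      ext a
      simp only [Finset.mem_filter, hmemA, Finset.mem_singleton]
      constructor
      · rintro ⟨⟨-, -, haM⟩ | rfl | rfl | rfl | rfl | rfl, h2⟩
        · exact absurd h2 (hMpj a haM).2
        · exact absurd h2 hpipj
        · exact absurd h2 (Ne.symm hpji)
        · rfl
        · exact absurd h2 (Ne.symm hpjj)
        · exact absurd h2 hpipj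
      · rintro rfl
        exact ⟨Or.inr (Or.inr (Or.inr (Or.inl rfl))), rfl⟩
    have hFoutpj : N.A.filter (fun a => a.1 = pj) = {(pj, j), (pj, pi)} := by
      ext a
      simp only [Finset.mem_filter, hmemA, Finset.mem_insert, Finset.mem_singleton]
      constructor
      · rintro ⟨⟨-, -, haM⟩ | rfl | rfl | rfl | rfl | rfl, h2⟩
        · exact absurd h2 (hMpj a haM).1
        · exact absurd h2 (Ne.symm hpjqi)
        · exact absurd h2 hpipj
        · exact absurd h2 (Ne.symm hpjqj)
        · exact Or.inl rfl
        · exact Or.inr rfl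
      · rintro (rfl | rfl)
        · exact ⟨Or.inr (Or.inr (Or.inr (Or.inr (Or.inl rfl)))), rfl⟩
        · exact ⟨Or.inr (Or.inr (Or.inr (Or.inr (Or.inr rfl)))), rfl⟩
    have hpin : ∀ p', (p', i) ∈ N.A → p' = pi := by
      intro p' hmem
      have : ((p', i) : ℕ × ℕ) ∈ N.A.filter (fun a => a.2 = i) :=
        Finset.mem_filter.mpr ⟨hmem, rfl⟩
      rw [hFini, Finset.mem_singleton] at this
      exact congrArg Prod.fst this
    have hpjn : ∀ p', (p', j) ∈ N.A → p' = pj := by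
      intro p' hmem
      have : ((p', j) : ℕ × ℕ) ∈ N.A.filter (fun a => a.2 = j) :=
        Finset.mem_filter.mpr ⟨hmem, rfl⟩
      rw [hFinj, Finset.mem_singleton] at this
      exact congrArg Prod.fst this
    have hqin : ∀ q', (q', pi) ∈ N.A → q' = qi ∨ q' = pj := by
      intro q' hmem
      have : ((q', pi) : ℕ × ℕ) ∈ N.A.filter (fun a => a.2 = pi) :=
        Finset.mem_filter.mpr ⟨hmem, rfl⟩
      rw [hFinpi, Finset.mem_insert, Finset.mem_singleton] at this
      rcases this with h | h
      · exact Or.inl (congrArg Prod.fst h)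
      · exact Or.inr (congrArg Prod.fst h)
    have hgjn : ∀ g', (g', pj) ∈ N.A → g' = qj := by
      intro g' hmem
      have : ((g', pj) : ℕ × ℕ) ∈ N.A.filter (fun a => a.2 = pj) :=
        Finset.mem_filter.mpr ⟨hmem, rfl⟩
      rw [hFinpj, Finset.mem_singleton] at this
      exact congrArg Prod.fst this
    have hpiiA : ((pi, i) : ℕ × ℕ) ∈ N.A := (hmemA _).mpr (Or.inr (Or.inr (Or.inl rfl)))
    have hpjjA : ((pj, j) : ℕ × ℕ) ∈ N.A :=
      (hmemA _).mpr (Or.inr (Or.inr (Or.inr (Or.inr (Or.inl rfl)))))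
    have hpjpiA : ((pj, pi) : ℕ × ℕ) ∈ N.A :=
      (hmemA _).mpr (Or.inr (Or.inr (Or.inr (Or.inr (Or.inr rfl)))))
    have hqipiA : ((qi, pi) : ℕ × ℕ) ∈ N.A := (hmemA _).mpr (Or.inr (Or.inl rfl))
    have hqjpjA : ((qj, pj) : ℕ × ℕ) ∈ N.A :=
      (hmemA _).mpr (Or.inr (Or.inr (Or.inr (Or.inl rfl))))
    have hleafNi : N.isLeaf i :=
      ⟨by simp [hV, hiV'], by simp [Net.indeg, hFini], by simp [Net.outdeg, hFouti]⟩
    have hleafNj : N.isLeaf j :=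
      ⟨by simp [hV, hjV], by simp [Net.indeg, hFinj], by simp [Net.outdeg, hFoutj]⟩
    have hreticpi : N.isRetic pi := by
      refine ⟨by simp [hV], ?_, ?_⟩
      · rw [Net.indeg, hFinpi, Finset.card_insert_of_notMem (by simp [Ne.symm hpjqi]),
          Finset.card_singleton]
      · rw [Net.outdeg, hFoutpi, Finset.card_singleton]
    have htreepj : N.isTreeNode pj := by
      refine ⟨by simp [hV], ?_, ?_⟩
      · rw [Net.indeg, hFinpj, Finset.card_singleton]
      · rw [Net.outdeg, hFoutpj, Finset.card_insert_of_notMem (by simp [Ne.symm hpij]),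
          Finset.card_singleton]
    have hretcherry : N.isRetCherry i j :=
      ⟨hij, hleafNi, hleafNj, pi, pj, hpiiA, hpjjA, hreticpi, htreepj, hpjpiA⟩
    have hVeq : (N.V.erase pi).erase pj = M.V := by
      have h1 : pi ∉ insert pj M.V := by simp [hpiV, hpipj]
      rw [hV, Finset.erase_insert h1, Finset.erase_insert hpjV]
    have hAeq :
        (N.A \ {(pj, pi), (qi, pi), (pi, i), (qj, pj), (pj, j)}) ∪ {(qi, i), (qj, j)} = M.A := by
      ext a
      simp only [Finset.mem_union, Finset.mem_sdiff, hmemA, Finset.mem_insert,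
        Finset.mem_singleton]
      constructor
      · rintro (⟨h1, h2⟩ | rfl | rfl)
        · push_neg at h2
          rcases h1 with ⟨-, -, haM⟩ | rfl | rfl | rfl | rfl | rfl
          · exact haM
          · exact absurd rfl h2.2.1
          · exact absurd rfl h2.2.2.1
          · exact absurd rfl h2.2.2.2.1
          · exact absurd rfl h2.2.2.2.2
          · exact absurd rfl h2.1
        · exact hqiA
        · exact hqjA
      · intro haM
        by_cases hq1 : a = (qi, i)
        · exact Or.inr (Or.inl hq1)
        by_cases hq2 : a = (qj, j)
        · exact Or.inr (Or.inr hq2)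
        left
        refine ⟨Or.inl ⟨hq2, hq1, haM⟩, ?_⟩
        push_neg
        refine ⟨?_, ?_, ?_, ?_, ?_⟩ <;> rintro rfl
        · exact hpjV (hM _ haM).1
        · exact hpiV (hM _ haM).2
        · exact hpiV (hM _ haM).1
        · exact hpjV (hM _ haM).2
        · exact hpjV (hM _ haM).1
    have hred : Reduces N (i, j) M :=
      Or.inr ⟨hretcherry, pi, pj, qi, qj, hpiiA, hpjjA, hpjpiA, hqipiA, Ne.symm hpjqi,
        hqjpjA, hVeq.symm, hAeq.symm⟩
    refine ⟨hred, ?_⟩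
    intro M₀ hR
    rcases hR with ⟨hch, -⟩ | ⟨-, pi', pj', q', g', h1, h2, h3, h4, h5, h6, hV₀, hA₀⟩
    · obtain ⟨-, -, -, p', hp1, hp2⟩ := hch
      exact absurd ((hpin p' hp1).symm.trans (hpjn p' hp2)) hpipj
    · obtain rfl := hpin pi' h1
      obtain rfl := hpjn pj' h2
      rcases hqin q' h4 with rfl | rfl
      · obtain rfl := hgjn g' h6
        exact Net.ext' (hV₀.trans hVeq) (hA₀.trans hAeq)
      · exact absurd rfl h5

lemma minAugSeq_tail {T : List (ℕ × ℕ)} (h : isMinAugSeq T) : isMinAugSeq (T.drop 1) := by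
  cases T with
  | nil => simpa using h
  | cons s S' =>
    simp only [List.drop_succ_cons, List.drop_zero]
    obtain ⟨N, hgen, hmcrs⟩ := h
    cases hgen with
    | cons hg ha =>
      rename_i M
      have hM : ArcsOK M := generates_arcsOK hg
      obtain ⟨hred, huniq⟩ := aug_key hM ha
      refine ⟨M, hg, ?_, ?_⟩
      · obtain ⟨Nf, l, hrs, htriv⟩ := hmcrs.1
        cases hrs with
        | cons hr hrs' =>
          rename_i M₀
          obtain rfl := huniq M₀ hr
          exact ⟨Nf, l, hrs', htriv⟩
      · intro S'' hc
        obtain ⟨Nf, l, hrs, htriv⟩ := hc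
        have hcN : CompleteRS N (s :: S'') := ⟨Nf, l, ReducesSeq.cons hred hrs, htriv⟩
        have hle := hmcrs.2 _ hcN
        rcases hle with hlt | ⟨-, hle⟩
        · rcases hlt with hlt | ⟨-, hlt⟩ <;> exact absurd hlt (lt_irrefl _)
        · exact hle

end MinAugAux

/-- Every suffix of a minimum augmentation sequence is itself a minimum
augmentation sequence. -/
theorem suffix_of_minAugSeq (S : List (ℕ × ℕ)) (h : isMinAugSeq S) :
    ∀ t : ℕ, isMinAugSeq (S.drop t) := by
  intro t
  induction t with
  | zero => simpa using h
  | succ n ih =>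
    have := minAugSeq_tail ih
    rwa [List.drop_drop] at this
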